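/- arXiv:1906.03240 — 2 statements merged into one kernel-verified Lean document; each statement's English description precedes it below -/
import Mathlib

section
/- Let k be a field, t ∈ k with t ∉ {0,1}, and let x, y ∈ k with x ≠ y and x, y ∉ {0, 1, t}. Define φ : P^1(k) → P^1(k) by φ(a : b) = ((ya − xb)((y−1)(y−t)a − (x−1)(x−t)b) : −(x−y)² ab) in homogeneous coordinates. Then φ is a well-defined morphism of degree 2, i.e., the two homogeneous quadratic forms (ya − xb)((y−1)(y−t)a − (x−1)(x−t)b) and −(x−y)² ab have no common nontrivial zero (a : b). -/
/-- The two homogeneous quadratic forms defining the degree-2 map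
`φ(a : b) = ((ya − xb)((y−1)(y−t)a − (x−1)(x−t)b) : −(x−y)² ab)` have no common
nontrivial zero, so `φ : ℙ¹ → ℙ¹` is a well-defined morphism of degree 2. -/
theorem degree_two_map_well_defined {k : Type*} [Field k]
    (t : k) (ht0 : t ≠ 0) (ht1 : t ≠ 1)
    (x y : k) (hxy : x ≠ y)
    (hx : x ∉ ({0, 1, t} : Set k)) (hy : y ∉ ({0, 1, t} : Set k)) :
    ∀ a b : k, ¬(a = 0 ∧ b = 0) →
      ¬((y * a - x * b) * ((y - 1) * (y - t) * a - (x - 1) * (x - t) * b) = 0 ∧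
        -(x - y) ^ 2 * (a * b) = 0) := by
  simp only [Set.mem_insert_iff, Set.mem_singleton_iff, not_or] at hx hy
  obtain ⟨hx0, hx1, hxt⟩ := hx
  obtain ⟨hy0, hy1, hyt⟩ := hy
  intro a b hab ⟨h1, h2⟩
  have hxy' : x - y ≠ 0 := sub_ne_zero.mpr hxy
  have hab' : a * b = 0 := by
    rcases mul_eq_zero.mp h2 with h | h
    · exact absurd (pow_eq_zero_iff two_ne_zero |>.mp (neg_eq_zero.mp h)) hxy'
    · exact h
  rcases mul_eq_zero.mp hab' with ha | hb
  · subst ha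
    have hb : b ≠ 0 := fun h => hab ⟨rfl, h⟩
    rcases mul_eq_zero.mp h1 with h | h
    · simp only [mul_zero, zero_sub, neg_eq_zero, mul_eq_zero] at h
      tauto
    · simp only [mul_zero, zero_sub, neg_eq_zero, mul_eq_zero, sub_eq_zero] at h
      tauto
  · subst hb
    have ha : a ≠ 0 := fun h => hab ⟨h, rfl⟩
    rcases mul_eq_zero.mp h1 with h | h
    · simp only [mul_zero, sub_zero, mul_eq_zero] at h
      tauto
    · simp only [mul_zero, sub_zero, mul_eq_zero, sub_eq_zero] at h
      tauto
end

section
/- Let k be a field, t ∈ k \ {0,1}, x, y ∈ k \ {0,1,t} with x ≠ y, and f as above. The map f : k^* → k extends to a 2-to-1 (counted with multiplicity) map and its ramification values among {0, 1, t, ∞} are characterized by: z = p ∈ {0,1,t} is attained by exactly one r ∈ k^* (rather than two) if and only if (x−p₁)(x−p₂)/((y−p₁)(y−p₂)) = (x−p₃)/(y−p₃) where {p₁,p₂,p₃} = {0,1,t} and p = p₃. Equivalently: the quadratic y(y−1)(y−t)r² − [x(y−1)(y−t)+y(x−1)(x−t) − p(x−y)²]r + x(x−1)(x−t) has a double root iff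 r₁ = r₂ where r₁ = (x−p₁)(x−p₂)/((y−p₁)(y−p₂)) and r₂ = (x−p₃)/(y−p₃) are its two roots. -/
set_option maxHeartbeats 1600000


/-- For `{p₁,p₂,p₃} = {0,1,t}` and `p = p₃`, the solutions in `k^*` of `f(r) = p₃`,
where `f(r) = (yr−x)((y−1)(y−t)r−(x−1)(x−t))/(−(x−y)²r)`, are exactly
`r₁ = (x−p₁)(x−p₂)/((y−p₁)(y−p₂))` and `r₂ = (x−p₃)/(y−p₃)`; in particular `p₃` is a
ramification value (attained by exactly one `r`) iff `r₁ = r₂`. -/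
theorem preimages_of_special_point {k : Type*} [Field k]
    (t : k) (ht0 : t ≠ 0) (ht1 : t ≠ 1)
    (p₁ p₂ p₃ : k) (hP : ({p₁, p₂, p₃} : Set k) = {0, 1, t})
    (x y : k) (hxy : x ≠ y)
    (hx : x ∉ ({0, 1, t} : Set k)) (hy : y ∉ ({0, 1, t} : Set k)) :
    let f : k → k := fun r =>
      (y * r - x) * ((y - 1) * (y - t) * r - (x - 1) * (x - t)) / (-(x - y) ^ 2 * r)
    let r₁ : k := (x - p₁) * (x - p₂) / ((y - p₁) * (y - p₂))
    let r₂ : k := (x - p₃) / (y - p₃)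
    f r₁ = p₃ ∧ f r₂ = p₃ ∧ ∀ r : k, r ≠ 0 → f r = p₃ → r = r₁ ∨ r = r₂ := by
  intro f r₁ r₂
  -- membership facts
  have hmem : ∀ z ∈ ({p₁, p₂, p₃} : Set k), z ∈ ({0, 1, t} : Set k) := by rw [hP]; intro z hz; exact hz
  have hp₁ : p₁ ∈ ({0, 1, t} : Set k) := hmem p₁ (by simp)
  have hp₂ : p₂ ∈ ({0, 1, t} : Set k) := hmem p₂ (by simp)
  have hp₃ : p₃ ∈ ({0, 1, t} : Set k) := hmem p₃ (by simp)
  have hxp₁ : x - p₁ ≠ 0 := sub_ne_zero.mpr fun h => hx (h ▸ hp₁)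
  have hxp₂ : x - p₂ ≠ 0 := sub_ne_zero.mpr fun h => hx (h ▸ hp₂)
  have hxp₃ : x - p₃ ≠ 0 := sub_ne_zero.mpr fun h => hx (h ▸ hp₃)
  have hyp₁ : y - p₁ ≠ 0 := sub_ne_zero.mpr fun h => hy (h ▸ hp₁)
  have hyp₂ : y - p₂ ≠ 0 := sub_ne_zero.mpr fun h => hy (h ▸ hp₂)
  have hyp₃ : y - p₃ ≠ 0 := sub_ne_zero.mpr fun h => hy (h ▸ hp₃)
  obtain ⟨hx0, hx1, hxt⟩ : x ≠ 0 ∧ x ≠ 1 ∧ x ≠ t := by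
    simp only [Set.mem_insert_iff, Set.mem_singleton_iff] at hx; tauto
  obtain ⟨hy0, hy1, hyt⟩ : y ≠ 0 ∧ y ≠ 1 ∧ y ≠ t := by
    simp only [Set.mem_insert_iff, Set.mem_singleton_iff] at hy; tauto
  have hxy' : x - y ≠ 0 := sub_ne_zero.mpr hxy
  have hy1' : y - 1 ≠ 0 := sub_ne_zero.mpr hy1
  have hyt' : y - t ≠ 0 := sub_ne_zero.mpr hyt
  have hx1' : x - 1 ≠ 0 := sub_ne_zero.mpr hx1
  have hxt' : x - t ≠ 0 := sub_ne_zero.mpr hxt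
  -- the permutation
  have hv₁ := hP ▸ (show p₁ ∈ ({p₁, p₂, p₃} : Set k) by simp)
  have hv₂ := hP ▸ (show p₂ ∈ ({p₁, p₂, p₃} : Set k) by simp)
  have hv₃ := hP ▸ (show p₃ ∈ ({p₁, p₂, p₃} : Set k) by simp)
  have hw₀ := hP.symm ▸ (show (0:k) ∈ ({0, 1, t} : Set k) by simp)
  have hw₁ := hP.symm ▸ (show (1:k) ∈ ({0, 1, t} : Set k) by simp)
  have hwₜ := hP.symm ▸ (show t ∈ ({0, 1, t} : Set k) by simp)
  simp only [Set.mem_insert_iff, Set.mem_singleton_iff] at hv₁ hv₂ hv₃ hw₀ hw₁ hwₜ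
  have hperm : (p₁ = 0 ∧ p₂ = 1 ∧ p₃ = t) ∨ (p₁ = 0 ∧ p₂ = t ∧ p₃ = 1) ∨
      (p₁ = 1 ∧ p₂ = 0 ∧ p₃ = t) ∨ (p₁ = 1 ∧ p₂ = t ∧ p₃ = 0) ∨
      (p₁ = t ∧ p₂ = 0 ∧ p₃ = 1) ∨ (p₁ = t ∧ p₂ = 1 ∧ p₃ = 0) := by
    rcases hv₁ with h1 | h1 | h1 <;> rcases hv₂ with h2 | h2 | h2 <;>
      rcases hv₃ with h3 | h3 | h3 <;> subst h1 <;> subst h2 <;> subst h3 <;> simp_all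
  have hkey : ∀ r : k, r ≠ 0 → (f r = p₃ ↔
      (y * r - x) * ((y - 1) * (y - t) * r - (x - 1) * (x - t)) = p₃ * (-(x - y) ^ 2 * r)) := by
    intro r hr
    rw [div_eq_iff (by simp [hxy', hr, sub_ne_zero, pow_eq_zero_iff])]
  have hr₁0 : r₁ ≠ 0 :=
    div_ne_zero (mul_ne_zero hxp₁ hxp₂) (mul_ne_zero hyp₁ hyp₂)
  have hr₂0 : r₂ ≠ 0 := div_ne_zero hxp₃ hyp₃
  refine ⟨?_, ?_, ?_⟩
  · rw [hkey r₁ hr₁0]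
    simp only [r₁]
    rcases hperm with ⟨rfl, rfl, rfl⟩ | ⟨rfl, rfl, rfl⟩ | ⟨rfl, rfl, rfl⟩ | ⟨rfl, rfl, rfl⟩ |
        ⟨rfl, rfl, rfl⟩ | ⟨rfl, rfl, rfl⟩ <;>
      field_simp <;> ring
  · rw [hkey r₂ hr₂0]
    simp only [r₂]
    rcases hperm with ⟨rfl, rfl, rfl⟩ | ⟨rfl, rfl, rfl⟩ | ⟨rfl, rfl, rfl⟩ | ⟨rfl, rfl, rfl⟩ |
        ⟨rfl, rfl, rfl⟩ | ⟨rfl, rfl, rfl⟩ <;>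
      field_simp <;> ring
  · intro r hr hfr
    rw [hkey r hr] at hfr
    have expand : (y - p₁) * (y - p₂) * (y - p₃) * ((r - r₁) * (r - r₂)) =
        (y * r - x) * ((y - 1) * (y - t) * r - (x - 1) * (x - t)) - p₃ * (-(x - y) ^ 2 * r) := by
      simp only [r₁, r₂]
      rcases hperm with ⟨rfl, rfl, rfl⟩ | ⟨rfl, rfl, rfl⟩ | ⟨rfl, rfl, rfl⟩ | ⟨rfl, rfl, rfl⟩ |
          ⟨rfl, rfl, rfl⟩ | ⟨rfl, rfl, rfl⟩ <;>
        field_simp <;> ring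
    have hfac : (r - r₁) * (r - r₂) = 0 := by
      apply mul_left_cancel₀ (mul_ne_zero (mul_ne_zero hyp₁ hyp₂) hyp₃)
      rw [mul_zero, expand, hfr, sub_self]
    rcases mul_eq_zero.mp hfac with h | h
    · exact Or.inl (sub_eq_zero.mp h)
    · exact Or.inr (sub_eq_zero.mp h)
end
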